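/- arXiv:2206.14490 — 2 statements merged into one kernel-verified Lean document; each statement's English description precedes it below -/
import Mathlib

section
/- (Upper semicontinuity, P5.) Let Γ be a compact convex random set, K ∈ K_c(ℝ^p), and (K_n)_n a sequence in K_c(ℝ^p) with lim_{n→∞} d_H(K, K_n) = 0. Then limsup_{n→∞} D_CT(K_n;Γ) ≤ D_CT(K;Γ). In other words, D_CT(·;Γ) is upper semicontinuous on (K_c(ℝ^p), d_H). -/
open MeasureTheory Metric Filter Topology TopologicalSpace
open scoped Pointwise ENNReal

/-- Support function of a set in a real inner product space. -/
noncomputable def supportFn {E : Type*} [NormedAddCommGroup E] [InnerProductSpace ℝ E]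
    (K : Set E) (u : E) : ℝ :=
  sSup ((fun k => (inner ℝ k u : ℝ)) '' K)

/-- Tukey depth of a set `K` with respect to the set-valued map `Γ` under `P`. -/
noncomputable def DCT {Ω : Type*} [MeasurableSpace Ω] {E : Type*}
    [NormedAddCommGroup E] [InnerProductSpace ℝ E]
    (P : Measure Ω) (Γ : Ω → Set E) (K : Set E) : ℝ :=
  min (⨅ u : sphere (0 : E) 1, (P {ω | supportFn (Γ ω) (u : E) ≤ supportFn K (u : E)}).toReal)
      (⨅ u : sphere (0 : E) 1, (P {ω | supportFn K (u : E) ≤ supportFn (Γ ω) (u : E)}).toReal)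

/-- Borel measurable structure on nonempty compact subsets with the Hausdorff metric. -/
noncomputable instance {E : Type*} [MetricSpace E] :
    MeasurableSpace (NonemptyCompacts E) := borel _

instance {E : Type*} [MetricSpace E] : BorelSpace (NonemptyCompacts E) := ⟨rfl⟩

section Aux

variable {E : Type*} [NormedAddCommGroup E] [InnerProductSpace ℝ E]

lemma bddAbove_supportFn_image {L : Set E} (hL : IsCompact L) (u : E) :
    BddAbove ((fun k => (inner ℝ k u : ℝ)) '' L) :=
  (hL.image (continuous_id.inner continuous_const)).bddAbove

lemma supportFn_le_add {K L : Set E} (hKne : K.Nonempty) (hL : IsCompact L) (hLne : L.Nonempty)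
    (hfin : EMetric.hausdorffEdist K L ≠ ⊤) (u : E) :
    supportFn K u ≤ supportFn L u + hausdorffDist K L * ‖u‖ := by
  refine csSup_le (hKne.image _) ?_
  rintro x ⟨k, hk, rfl⟩
  obtain ⟨l, hl, hld⟩ := hL.exists_infDist_eq_dist hLne k
  have hdl : dist k l ≤ hausdorffDist K L := by
    rw [← hld]; exact infDist_le_hausdorffDist_of_mem hk hfin
  have h1 : (inner ℝ l u : ℝ) ≤ supportFn L u :=
    le_csSup (bddAbove_supportFn_image hL u) ⟨l, hl, rfl⟩
  have h2 : (inner ℝ (k - l) u : ℝ) ≤ ‖k - l‖ * ‖u‖ := real_inner_le_norm _ _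
  have h3 : (inner ℝ k u : ℝ) = inner ℝ l u + inner ℝ (k - l) u := by
    rw [inner_sub_left]; ring
  have h4 : ‖k - l‖ * ‖u‖ ≤ hausdorffDist K L * ‖u‖ := by
    apply mul_le_mul_of_nonneg_right _ (norm_nonneg u)
    rw [← dist_eq_norm]; exact hdl
  linarith

lemma lipschitz_supportFn (u : E) :
    LipschitzWith ‖u‖₊ (fun S : NonemptyCompacts E => supportFn (S : Set E) u) := by
  apply LipschitzWith.of_dist_le_mul
  intro x y
  rw [Real.dist_eq, NonemptyCompacts.dist_eq]
  have fin : EMetric.hausdorffEdist (x : Set E) (y : Set E) ≠ ⊤ :=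
    hausdorffEdist_ne_top_of_nonempty_of_bounded x.nonempty y.nonempty
      x.isCompact.isBounded y.isCompact.isBounded
  have h1 := supportFn_le_add x.nonempty y.isCompact y.nonempty fin u
  have h2 := supportFn_le_add y.nonempty x.isCompact x.nonempty
    (by rwa [EMetric.hausdorffEdist, EMetric.hausdorffEdist_comm]) u
  rw [hausdorffDist_comm] at h2
  rw [abs_sub_le_iff]
  constructor
  · calc supportFn (x : Set E) u - supportFn (y : Set E) u
        ≤ hausdorffDist (x : Set E) (y : Set E) * ‖u‖ := by linarith
      _ = ‖u‖₊ * hausdorffDist (x : Set E) (y : Set E) := by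
          rw [mul_comm]; simp [coe_nnnorm]
  · calc supportFn (y : Set E) u - supportFn (x : Set E) u
        ≤ hausdorffDist (x : Set E) (y : Set E) * ‖u‖ := by linarith
      _ = ‖u‖₊ * hausdorffDist (x : Set E) (y : Set E) := by
          rw [mul_comm]; simp [coe_nnnorm]

/-- right continuity of the CDF, quantitative form. -/
lemma exists_delta_cdf {Ω : Type*} [MeasurableSpace Ω] (P : Measure Ω) [IsProbabilityMeasure P]
    {X : Ω → ℝ} (hX : Measurable X) (t : ℝ) {ε : ℝ} (hε : 0 < ε) :
    ∃ δ > (0 : ℝ), (P {ω | X ω ≤ t + δ}).toReal ≤ (P {ω | X ω ≤ t}).toReal + ε := by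
  set s : ℕ → Set Ω := fun m => {ω | X ω ≤ t + 1 / (m + 1)} with hs
  have hmeas : ∀ m, NullMeasurableSet (s m) P := fun m =>
    (hX measurableSet_Iic).nullMeasurableSet
  have hanti : Antitone s := by
    intro m m' hmm' ω hω
    simp only [Set.mem_setOf_eq, s] at hω ⊢
    have h1 : (1 : ℝ) / (m' + 1) ≤ 1 / (m + 1) := by gcongr <;> exact_mod_cast hmm'
    linarith
  have hiInter : ⋂ m, s m = {ω | X ω ≤ t} := by
    ext ω
    simp only [Set.mem_iInter, Set.mem_setOf_eq, s]
    constructor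
    · intro h
      by_contra hc
      push_neg at hc
      obtain ⟨m, hm⟩ := exists_nat_one_div_lt (sub_pos.2 hc)
      exact absurd (h m) (by push_neg; linarith)
    · intro h m
      have : (0 : ℝ) < 1 / (m + 1) := by positivity
      linarith
  have htend : Tendsto (fun m => (P (s m)).toReal) atTop
      (𝓝 ((P {ω | X ω ≤ t}).toReal)) := by
    have h1 : Tendsto (P ∘ s) atTop (𝓝 (P (⋂ m, s m))) :=
      tendsto_measure_iInter_atTop hmeas hanti ⟨0, measure_ne_top _ _⟩
    rw [hiInter] at h1
    exact (ENNReal.tendsto_toReal (measure_ne_top _ _)).comp h1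
  have := htend.eventually (eventually_le_nhds (lt_add_of_pos_right _ hε))
  obtain ⟨m, hm⟩ := this.exists
  exact ⟨1 / (m + 1), by positivity, hm⟩

/-- left continuity of the survival function, quantitative form. -/
lemma exists_delta_surv {Ω : Type*} [MeasurableSpace Ω] (P : Measure Ω) [IsProbabilityMeasure P]
    {X : Ω → ℝ} (hX : Measurable X) (t : ℝ) {ε : ℝ} (hε : 0 < ε) :
    ∃ δ > (0 : ℝ), (P {ω | t - δ ≤ X ω}).toReal ≤ (P {ω | t ≤ X ω}).toReal + ε := by
  obtain ⟨δ, hδ, h⟩ := exists_delta_cdf P hX.neg (-t) hε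
  refine ⟨δ, hδ, ?_⟩
  have e1 : {ω | -X ω ≤ -t + δ} = {ω | t - δ ≤ X ω} := by
    ext ω; simp only [Set.mem_setOf_eq]; constructor <;> intro <;> linarith
  have e2 : {ω | -X ω ≤ -t} = {ω | t ≤ X ω} := by
    ext ω; simp only [Set.mem_setOf_eq]; constructor <;> intro <;> linarith
  simp only [Pi.neg_apply] at h
  rwa [e1, e2] at h

end Aux

/-- P5, upper semicontinuity: if `K_n → K` in the Hausdorff metric, then
`limsup_n D_CT(K_n;Γ) ≤ D_CT(K;Γ)`. -/
theorem DCT_upper_semicontinuous {p : ℕ} {Ω : Type*} [MeasurableSpace Ω]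
    (P : Measure Ω) [IsProbabilityMeasure P]
    (Γ : Ω → NonemptyCompacts (EuclideanSpace ℝ (Fin p)))
    (hconv : ∀ ω, Convex ℝ (Γ ω : Set (EuclideanSpace ℝ (Fin p))))
    (hΓ : Measurable Γ)
    (K : Set (EuclideanSpace ℝ (Fin p)))
    (hKne : K.Nonempty) (hKcomp : IsCompact K) (hKconv : Convex ℝ K)
    (Kn : ℕ → Set (EuclideanSpace ℝ (Fin p)))
    (hKnne : ∀ n, (Kn n).Nonempty) (hKncomp : ∀ n, IsCompact (Kn n))
    (hKnconv : ∀ n, Convex ℝ (Kn n))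
    (hlim : Tendsto (fun n => hausdorffDist K (Kn n)) atTop (nhds 0)) :
    Filter.limsup (fun n => DCT P (fun ω => (Γ ω : Set (EuclideanSpace ℝ (Fin p)))) (Kn n))
      atTop ≤ DCT P (fun ω => (Γ ω : Set (EuclideanSpace ℝ (Fin p)))) K := by
  set Γ' : Ω → Set (EuclideanSpace ℝ (Fin p)) := fun ω => (Γ ω : Set (EuclideanSpace ℝ (Fin p)))
    with hΓ'
  have hXmeas : ∀ u : EuclideanSpace ℝ (Fin p), Measurable (fun ω => supportFn (Γ' ω) u) :=
    fun u => ((lipschitz_supportFn u).continuous.measurable).comp hΓ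
  have hDnonneg : ∀ L : Set (EuclideanSpace ℝ (Fin p)), 0 ≤ DCT P Γ' L := fun L =>
    le_min (Real.iInf_nonneg fun _ => ENNReal.toReal_nonneg)
      (Real.iInf_nonneg fun _ => ENNReal.toReal_nonneg)
  have hcobdd : IsCoboundedUnder (· ≤ ·) atTop (fun n => DCT P Γ' (Kn n)) :=
    isCoboundedUnder_le_of_le atTop (fun n => hDnonneg (Kn n))
  refine _root_.le_of_forall_pos_le_add fun ε hε => ?_
  by_cases hsp : Nonempty (sphere (0 : EuclideanSpace ℝ (Fin p)) 1)
  swap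
  · -- empty sphere: everything is 0
    have hzero : ∀ L : Set (EuclideanSpace ℝ (Fin p)), DCT P Γ' L = 0 := by
      intro L
      have : IsEmpty (sphere (0 : EuclideanSpace ℝ (Fin p)) 1) := not_nonempty_iff.mp hsp
      simp [DCT, iInf_of_isEmpty, Real.sInf_empty]
    calc Filter.limsup (fun n => DCT P Γ' (Kn n)) atTop
        = 0 := by simp only [hzero]; exact limsup_const 0
      _ ≤ DCT P Γ' K + ε := by rw [hzero K]; linarith
  -- nonempty sphere
  have hbdd : ∀ (f : sphere (0 : EuclideanSpace ℝ (Fin p)) 1 → ℝ), (∀ u, 0 ≤ f u) →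
      BddBelow (Set.range f) := fun f hf => ⟨0, by rintro x ⟨u, rfl⟩; exact hf u⟩
  set I₁ := ⨅ u : sphere (0 : EuclideanSpace ℝ (Fin p)) 1,
    (P {ω | supportFn (Γ' ω) (u : EuclideanSpace ℝ (Fin p)) ≤
      supportFn K (u : EuclideanSpace ℝ (Fin p))}).toReal with hI₁
  set I₂ := ⨅ u : sphere (0 : EuclideanSpace ℝ (Fin p)) 1,
    (P {ω | supportFn K (u : EuclideanSpace ℝ (Fin p)) ≤
      supportFn (Γ' ω) (u : EuclideanSpace ℝ (Fin p))}).toReal with hI₂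
  have hε2 : 0 < ε / 2 := by linarith
  obtain ⟨u₁, hu₁⟩ := exists_lt_of_ciInf_lt (a := I₁ + ε / 2)
    (by rw [← hI₁]; linarith)
  obtain ⟨u₂, hu₂⟩ := exists_lt_of_ciInf_lt (a := I₂ + ε / 2)
    (by rw [← hI₂]; linarith)
  have hnorm₁ : ‖(u₁ : EuclideanSpace ℝ (Fin p))‖ = 1 := norm_eq_of_mem_sphere u₁
  have hnorm₂ : ‖(u₂ : EuclideanSpace ℝ (Fin p))‖ = 1 := norm_eq_of_mem_sphere u₂
  obtain ⟨δ₁, hδ₁, hcdf₁⟩ := exists_delta_cdf P (hXmeas u₁) (supportFn K u₁) hε2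
  obtain ⟨δ₂, hδ₂, hcdf₂⟩ := exists_delta_surv P (hXmeas u₂) (supportFn K u₂) hε2
  have hfin : ∀ n, EMetric.hausdorffEdist K (Kn n) ≠ ⊤ := fun n =>
    hausdorffEdist_ne_top_of_nonempty_of_bounded hKne (hKnne n)
      hKcomp.isBounded (hKncomp n).isBounded
  have hδ := lt_min hδ₁ hδ₂
  have hev : ∀ᶠ n in atTop, hausdorffDist K (Kn n) < min δ₁ δ₂ :=
    hlim.eventually (eventually_lt_nhds hδ)
  refine limsup_le_of_le hcobdd ?_
  filter_upwards [hev] with n hn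
  have hd1 : hausdorffDist K (Kn n) < δ₁ := lt_of_lt_of_le hn (min_le_left _ _)
  have hd2 : hausdorffDist K (Kn n) < δ₂ := lt_of_lt_of_le hn (min_le_right _ _)
  have hs1 : supportFn (Kn n) u₁ ≤ supportFn K u₁ + δ₁ := by
    have h := supportFn_le_add (hKnne n) hKcomp hKne
      (by rw [EMetric.hausdorffEdist, EMetric.hausdorffEdist_comm]; exact hfin n) (u₁ : EuclideanSpace ℝ (Fin p))
    rw [hausdorffDist_comm] at h
    rw [hnorm₁, mul_one] at h
    linarith
  have hs2 : supportFn K u₂ - δ₂ ≤ supportFn (Kn n) u₂ := by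
    have h := supportFn_le_add hKne (hKncomp n) (hKnne n) (hfin n)
      (u₂ : EuclideanSpace ℝ (Fin p))
    rw [hnorm₂, mul_one] at h
    linarith
  have hb1 : DCT P Γ' (Kn n) ≤ I₁ + ε := by
    calc DCT P Γ' (Kn n)
        ≤ (P {ω | supportFn (Γ' ω) (u₁ : EuclideanSpace ℝ (Fin p)) ≤
            supportFn (Kn n) (u₁ : EuclideanSpace ℝ (Fin p))}).toReal :=
          le_trans (min_le_left _ _)
            (ciInf_le (hbdd _ fun _ => ENNReal.toReal_nonneg) u₁)
      _ ≤ (P {ω | supportFn (Γ' ω) (u₁ : EuclideanSpace ℝ (Fin p)) ≤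
            supportFn K (u₁ : EuclideanSpace ℝ (Fin p)) + δ₁}).toReal := by
          apply ENNReal.toReal_mono (measure_ne_top _ _)
          apply measure_mono
          intro ω hω
          exact le_trans hω hs1
      _ ≤ (P {ω | supportFn (Γ' ω) (u₁ : EuclideanSpace ℝ (Fin p)) ≤
            supportFn K (u₁ : EuclideanSpace ℝ (Fin p))}).toReal + ε / 2 := hcdf₁
      _ ≤ I₁ + ε := by linarith [hu₁]
  have hb2 : DCT P Γ' (Kn n) ≤ I₂ + ε := by
    calc DCT P Γ' (Kn n)
        ≤ (P {ω | supportFn (Kn n) (u₂ : EuclideanSpace ℝ (Fin p)) ≤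
            supportFn (Γ' ω) (u₂ : EuclideanSpace ℝ (Fin p))}).toReal :=
          le_trans (min_le_right _ _)
            (ciInf_le (hbdd _ fun _ => ENNReal.toReal_nonneg) u₂)
      _ ≤ (P {ω | supportFn K (u₂ : EuclideanSpace ℝ (Fin p)) - δ₂ ≤
            supportFn (Γ' ω) (u₂ : EuclideanSpace ℝ (Fin p))}).toReal := by
          apply ENNReal.toReal_mono (measure_ne_top _ _)
          apply measure_mono
          intro ω hω
          exact le_trans hs2 hω
      _ ≤ (P {ω | supportFn K (u₂ : EuclideanSpace ℝ (Fin p)) ≤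
            supportFn (Γ' ω) (u₂ : EuclideanSpace ℝ (Fin p))}).toReal + ε / 2 := hcdf₂
      _ ≤ I₂ + ε := by linarith [hu₂]
  calc DCT P Γ' (Kn n) ≤ min (I₁ + ε) (I₂ + ε) := le_min hb1 hb2
    _ = DCT P Γ' K + ε := by rw [DCT, ← hI₁, ← hI₂, min_add_add_right]
end

section
/- (Convexity of depth contours, P7.) Let Γ be a compact convex random set and α ∈ [0,1]. Then the depth region D_α = {K ∈ K_c(ℝ^p) : D_CT(K;Γ) ≥ α} is convex, i.e., for all K, L ∈ D_α and all λ ∈ [0,1], the set (1−λ)·K + λ·L = {(1−λ)k + λl : k ∈ K, l ∈ L} belongs to D_α. -/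
open MeasureTheory Metric Filter Topology TopologicalSpace
open scoped Pointwise ENNReal

lemma inner_le_supportFn {E : Type*} [NormedAddCommGroup E] [InnerProductSpace ℝ E]
    {K : Set E} (hK : IsCompact K) {k : E} (hk : k ∈ K) (u : E) :
    (inner ℝ k u : ℝ) ≤ supportFn K u :=
  le_csSup ((hK.image (continuous_id.inner continuous_const)).bddAbove) ⟨k, hk, rfl⟩

lemma supportFn_le {E : Type*} [NormedAddCommGroup E] [InnerProductSpace ℝ E]
    {K : Set E} (hK : K.Nonempty) {u : E} {c : ℝ} (h : ∀ k ∈ K, (inner ℝ k u : ℝ) ≤ c) :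
    supportFn K u ≤ c :=
  csSup_le (hK.image _) (by rintro _ ⟨k, hk, rfl⟩; exact h k hk)

lemma supportFn_eq_max {E : Type*} [NormedAddCommGroup E] [InnerProductSpace ℝ E]
    {K : Set E} (hne : K.Nonempty) (hK : IsCompact K) (u : E) :
    ∃ k ∈ K, supportFn K u = (inner ℝ k u : ℝ) := by
  obtain ⟨k, hk, hmax⟩ := hK.exists_isMaxOn (α := ℝ) hne
    ((continuous_id.inner continuous_const).continuousOn (s := K))
  exact ⟨k, hk, le_antisymm (supportFn_le hne fun x hx => hmax hx) (inner_le_supportFn hK hk u)⟩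

section Main
variable {E : Type*} [NormedAddCommGroup E] [InnerProductSpace ℝ E]

lemma supportFn_comb_mem_Icc {K L : Set E}
    (hKne : K.Nonempty) (hKcomp : IsCompact K) (hLne : L.Nonempty) (hLcomp : IsCompact L)
    {l : ℝ} (hl0 : 0 ≤ l) (hl1 : l ≤ 1) (u : E) :
    min (supportFn K u) (supportFn L u) ≤ supportFn ((1 - l) • K + l • L) u ∧
      supportFn ((1 - l) • K + l • L) u ≤ max (supportFn K u) (supportFn L u) := by
  have hMne : ((1 - l) • K + l • L).Nonempty :=
    (hKne.smul_set).add (hLne.smul_set)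
  have hMcomp : IsCompact ((1 - l) • K + l • L) :=
    (hKcomp.smul (1 - l)).add (hLcomp.smul l)
  obtain ⟨k₀, hk₀, hk₀e⟩ := supportFn_eq_max hKne hKcomp u
  obtain ⟨x₀, hx₀, hx₀e⟩ := supportFn_eq_max hLne hLcomp u
  constructor
  · have hmem : (1 - l) • k₀ + l • x₀ ∈ (1 - l) • K + l • L :=
      Set.add_mem_add (Set.smul_mem_smul_set hk₀) (Set.smul_mem_smul_set hx₀)
    have := inner_le_supportFn hMcomp hmem u
    rw [inner_add_left, real_inner_smul_left, real_inner_smul_left] at this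
    rw [← hk₀e, ← hx₀e] at this
    rcases le_total (supportFn K u) (supportFn L u) with h | h
    · nlinarith [min_le_left (supportFn K u) (supportFn L u)]
    · nlinarith [min_le_right (supportFn K u) (supportFn L u)]
  · apply supportFn_le hMne
    rintro m hm
    rw [Set.mem_add] at hm
    obtain ⟨a, ha, b, hb, rfl⟩ := hm
    obtain ⟨k, hk, rfl⟩ := ha
    obtain ⟨x, hx, rfl⟩ := hb
    rw [inner_add_left, real_inner_smul_left, real_inner_smul_left]
    have h1 := inner_le_supportFn hKcomp hk u
    have h2 := inner_le_supportFn hLcomp hx u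
    have h3 : supportFn K u ≤ max (supportFn K u) (supportFn L u) := le_max_left _ _
    have h4 : supportFn L u ≤ max (supportFn K u) (supportFn L u) := le_max_right _ _
    nlinarith

end Main


/-- P7, convexity of the depth contours: for every `α ∈ [0,1]`, the region
`D_α = {K ∈ K_c(ℝ^p) : D_CT(K;Γ) ≥ α}` is convex: if `K, L ∈ D_α` and `λ ∈ [0,1]`, then
`(1-λ)·K + λ·L ∈ D_α`. -/
theorem DCT_contours_convex {p : ℕ} {Ω : Type*} [MeasurableSpace Ω]
    (P : Measure Ω) [IsProbabilityMeasure P]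
    (Γ : Ω → NonemptyCompacts (EuclideanSpace ℝ (Fin p)))
    (hconv : ∀ ω, Convex ℝ (Γ ω : Set (EuclideanSpace ℝ (Fin p))))
    (hΓ : Measurable Γ)
    (α : ℝ) (hα : α ∈ Set.Icc (0 : ℝ) 1)
    (K L : Set (EuclideanSpace ℝ (Fin p)))
    (hKne : K.Nonempty) (hKcomp : IsCompact K) (hKconv : Convex ℝ K)
    (hLne : L.Nonempty) (hLcomp : IsCompact L) (hLconv : Convex ℝ L)
    (hK : α ≤ DCT P (fun ω => (Γ ω : Set (EuclideanSpace ℝ (Fin p)))) K)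
    (hL : α ≤ DCT P (fun ω => (Γ ω : Set (EuclideanSpace ℝ (Fin p)))) L)
    (l : ℝ) (hl : l ∈ Set.Icc (0 : ℝ) 1) :
    α ≤ DCT P (fun ω => (Γ ω : Set (EuclideanSpace ℝ (Fin p)))) ((1 - l) • K + l • L) := by
  have hkey := fun u : sphere (0 : EuclideanSpace ℝ (Fin p)) 1 =>
    supportFn_comb_mem_Icc hKne hKcomp hLne hLcomp hl.1 hl.2 (u : EuclideanSpace ℝ (Fin p))
  have hbdd : ∀ f : sphere (0 : EuclideanSpace ℝ (Fin p)) 1 → ℝ,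
      (∀ u, 0 ≤ f u) → BddBelow (Set.range f) :=
    fun f hf => ⟨0, by rintro x ⟨u, rfl⟩; exact hf u⟩
  have hPmono : ∀ A B : Set Ω, A ⊆ B → (P A).toReal ≤ (P B).toReal := fun A B h =>
    ENNReal.toReal_mono (measure_ne_top P B) (measure_mono h)
  rcases isEmpty_or_nonempty (sphere (0 : EuclideanSpace ℝ (Fin p)) 1) with hemp | hne
  · simpa [DCT, Real.iInf_of_isEmpty] using hK
  rw [DCT, le_min_iff] at hK hL ⊢
  obtain ⟨hK1, hK2⟩ := hK
  obtain ⟨hL1, hL2⟩ := hL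
  refine ⟨le_ciInf fun u => ?_, le_ciInf fun u => ?_⟩
  · obtain ⟨hmin, hmax⟩ := hkey u
    rcases le_total (supportFn K (u : EuclideanSpace ℝ (Fin p)))
        (supportFn L (u : EuclideanSpace ℝ (Fin p))) with h | h
    · refine le_trans hK1 (le_trans (ciInf_le (hbdd _ fun _ => ENNReal.toReal_nonneg) u) ?_)
      apply hPmono
      intro ω hω
      simp only [Set.mem_setOf_eq] at hω ⊢
      rw [min_eq_left h] at hmin
      linarith
    · refine le_trans hL1 (le_trans (ciInf_le (hbdd _ fun _ => ENNReal.toReal_nonneg) u) ?_)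
      apply hPmono
      intro ω hω
      simp only [Set.mem_setOf_eq] at hω ⊢
      rw [min_eq_right h] at hmin
      linarith
  · obtain ⟨hmin, hmax⟩ := hkey u
    rcases le_total (supportFn K (u : EuclideanSpace ℝ (Fin p)))
        (supportFn L (u : EuclideanSpace ℝ (Fin p))) with h | h
    · refine le_trans hL2 (le_trans (ciInf_le (hbdd _ fun _ => ENNReal.toReal_nonneg) u) ?_)
      apply hPmono
      intro ω hω
      simp only [Set.mem_setOf_eq] at hω ⊢
      rw [max_eq_right h] at hmax
      linarith
    · refine le_trans hK2 (le_trans (ciInf_le (hbdd _ fun _ => ENNReal.toReal_nonneg) u) ?_)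
      apply hPmono
      intro ω hω
      simp only [Set.mem_setOf_eq] at hω ⊢
      rw [max_eq_left h] at hmax
      linarith
end
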